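/- arXiv:1701.05791 — 8 statements merged into one kernel-verified Lean document; each statement's English description precedes it below -/
import Mathlib

section
/- For every linear order T there is a 2-coloring of the unordered pairs of T admitting no 0-homogeneous suborder of order type ω and no 1-homogeneous suborder of order type ω* (the reverse of ω); that is, τ ↛ (ω, ω*)² for every linear order type τ. -/
/-!
Sierpiński's colouring: fix a well-order `≺` of `T` and colour a pair `a < b` by `1` if `a ≺ b`
and by `0` otherwise. Along an increasing `ω`-sequence of colour `0`, and along a decreasing
`ω*`-sequence of colour `1`, each term is `≺`-below the previous one, which is impossible in a
well-order.
-/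

section Sierpinski

variable {T : Type*} (r : T → T → Prop) [DecidableRel r]

def sierpinskiColoring (a b : T) : Fin 2 := if r a b then 1 else 0

lemma exists_sierpinskiColoring_succ_ne_zero [Preorder T] [IsWellFounded T r] [Std.Trichotomous r]
    {g : ℕ → T} (hg : StrictMono g) :
    ∃ n, sierpinskiColoring r (g n) (g (n + 1)) ≠ 0 := by
  obtain ⟨n, hn⟩ := WellFounded.not_rel_apply_succ (r := r) g
  have hrel : r (g n) (g (n + 1)) :=
    (trichotomous_of r (g n) (g (n + 1))).resolve_right
      (not_or_intro (hg n.lt_succ_self).ne hn)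
  exact ⟨n, by simp [sierpinskiColoring, hrel]⟩

lemma exists_sierpinskiColoring_succ_ne_one [IsWellFounded T r] (g : ℕ → T) :
    ∃ n, sierpinskiColoring r (g (n + 1)) (g n) ≠ 1 := by
  obtain ⟨n, hn⟩ := WellFounded.not_rel_apply_succ (r := r) g
  exact ⟨n, by simp [sierpinskiColoring, hn]⟩

end Sierpinski

/-- For every linear order `T` there is a 2-coloring of the unordered pairs
of `T` admitting no 0-homogeneous suborder of order type `ω` and no 1-homogeneous
suborder of order type `ω*`; that is, `τ ↛ (ω, ω*)²` for every linear order type `τ`. -/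
theorem stmt0 (T : Type*) [LinearOrder T] :
    ∃ f : T → T → Fin 2,
      (¬ ∃ S : Set T, Nonempty (ℕ ≃o S) ∧ ∀ a ∈ S, ∀ b ∈ S, a < b → f a b = 0) ∧
      (¬ ∃ S : Set T, Nonempty (ℕᵒᵈ ≃o S) ∧ ∀ a ∈ S, ∀ b ∈ S, a < b → f a b = 1) := by
  classical
  refine ⟨sierpinskiColoring WellOrderingRel, ?_, ?_⟩
  · rintro ⟨S, ⟨e⟩, hS⟩
    obtain ⟨n, hn⟩ := exists_sierpinskiColoring_succ_ne_zero WellOrderingRel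
      (g := fun n => (e n : T)) (fun _ _ h => e.strictMono h)
    exact hn (hS _ (e n).2 _ (e (n + 1)).2 (e.strictMono n.lt_succ_self))
  · rintro ⟨S, ⟨e⟩, hS⟩
    obtain ⟨n, hn⟩ := exists_sierpinskiColoring_succ_ne_one WellOrderingRel
      (fun n => (e (OrderDual.toDual n) : T))
    exact hn (hS _ (e _).2 _ (e _).2 (e.strictMono (show n < n + 1 from n.lt_succ_self)))
end

section
/- Suppose ν is an infinite cardinal, κ = ν⁺, and φ is a κ-scattered linear order type. Then φ is (ℵ₀, κ)-scattered, i.e., every linear order of type φ is the union of fewer than κ scattered suborders. -/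
open Cardinal

universe u

/-- A suborder (subset with the induced order) is `κ`-dense if it has more than one
element and every open interval `(a,b)` with `a < b` has at least `κ` elements. -/
def KDense (κ : Cardinal.{u}) (P : Type u) [LinearOrder P] : Prop :=
  Nontrivial P ∧ ∀ a b : P, a < b → κ ≤ #{c : P // a < c ∧ c < b}

/-- A linear order is `κ`-scattered if it has no `κ`-dense suborder. -/
def KScattered (κ : Cardinal.{u}) (P : Type u) [LinearOrder P] : Prop :=
  ∀ S : Set P, ¬ KDense κ S

/-!
Call `x ≈ y` when the interval `[[x, y]]` is a union of at most `ν` scattered sets; since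
`ν + ν = ν`, this is an equivalence relation with convex classes. Each class is
itself a union of at most `ν` scattered sets: on each side of a point `x`, send every point
of the class to the least element above it of a cofinal well-ordered (hence scattered)
subset `W`; the fibre over `w ∈ W` lies in `[x, w]`, and the `ν` covers of the fibres can be
interleaved, because a dense set either meets some fibre twice (and then a dense piece of it
lies in that fibre) or is mapped injectively onto a dense subset of `W`.
If two points were inequivalent, a set of representatives of the classes would be
`ν⁺`-dense: between representatives `a < b` there are more than `ν` others, for otherwise
`[a, b]` would be covered by at most `ν` classes, and `a ≈ b`. So a `ν⁺`-scattered order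
consists of a single class.
-/

namespace Set

variable {α β : Type u} [LinearOrder α] [LinearOrder β] {κ ν : Cardinal.{u}}

def IsKDense (κ : Cardinal.{u}) (S : Set α) : Prop :=
  S.Nontrivial ∧ ∀ a ∈ S, ∀ b ∈ S, a < b → κ ≤ #↥(S ∩ Ioo a b)

def IsScattered (S : Set α) : Prop := ∀ T ⊆ S, ¬ T.IsKDense ℵ₀

def CoveredByScattered (ν : Cardinal.{u}) (S : Set α) : Prop :=
  ∃ (ι : Type u) (f : ι → Set α), #ι ≤ ν ∧ (∀ i, (f i).IsScattered) ∧ S ⊆ ⋃ i, f i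

section IsKDense

variable {S T : Set α}

theorem isKDense_coe_iff : KDense κ S ↔ S.IsKDense κ := by
  have hcard (a b : S) : #{c : S // a < c ∧ c < b} = #↥(S ∩ Ioo (a : α) b) :=
    mk_congr
      { toFun := fun c => ⟨c.1, c.1.2, c.2⟩
        invFun := fun c => ⟨⟨c.1, c.2.1⟩, c.2.2⟩
        left_inv := fun _ => rfl
        right_inv := fun _ => rfl }
  simp only [KDense, IsKDense, hcard, nontrivial_coe_sort, Subtype.forall, Subtype.mk_lt_mk]

theorem IsKDense.image {f : α → β} (hT : T.IsKDense κ) (hf : StrictMonoOn f T) :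
    (f '' T).IsKDense κ := by
  refine ⟨hT.1.image_of_injOn hf.injOn, ?_⟩
  rintro _ ⟨a, ha, rfl⟩ _ ⟨b, hb, rfl⟩ hab
  calc κ ≤ #↥(T ∩ Ioo a b) := hT.2 a ha b hb ((hf.lt_iff_lt ha hb).1 hab)
    _ = #↥(f '' (T ∩ Ioo a b)) :=
      (mk_image_eq_of_injOn _ _ (hf.injOn.mono inter_subset_left)).symm
    _ ≤ #↥(f '' T ∩ Ioo (f a) (f b)) := by
      refine mk_le_mk_of_subset ?_
      rintro _ ⟨c, ⟨hc, hac, hcb⟩, rfl⟩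
      exact ⟨mem_image_of_mem f hc, hf ha hc hac, hf hc hb hcb⟩

theorem IsKDense.inter_Icc (hT : T.IsKDense κ) {a b : α} (ha : a ∈ T) (hb : b ∈ T)
    (hab : a < b) : (T ∩ Icc a b).IsKDense κ := by
  refine ⟨⟨a, ⟨ha, le_rfl, hab.le⟩, b, ⟨hb, hab.le, le_rfl⟩, hab.ne⟩, ?_⟩
  rintro u ⟨hu, hau, -⟩ v ⟨hv, -, hvb⟩ huv
  rw [inter_assoc, inter_eq_right.2 (Ioo_subset_Icc_self.trans (Icc_subset_Icc hau hvb))]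
  exact hT.2 u hu v hv huv

theorem isKDense_preimage_ofDual_iff :
    (OrderDual.ofDual ⁻¹' S).IsKDense κ ↔ S.IsKDense κ := by
  refine and_congr Iff.rfl ⟨fun h a ha b hb hab => ?_, fun h a ha b hb hab => ?_⟩
  · have := h (OrderDual.toDual b) hb (OrderDual.toDual a) ha hab
    rwa [Ioo_toDual, ← preimage_inter] at this
  · have := h b hb a ha hab
    rwa [← OrderDual.toDual_ofDual a, ← OrderDual.toDual_ofDual b, Ioo_toDual, ← preimage_inter]

end IsKDense

section IsScattered

variable {S T : Set α}

theorem IsScattered.mono (hS : S.IsScattered) (hTS : T ⊆ S) : T.IsScattered :=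
  fun U hUT => hS U (hUT.trans hTS)

theorem Subsingleton.isScattered (hS : S.Subsingleton) : S.IsScattered :=
  fun _ hTS hT => hT.1.not_subsingleton (hS.anti hTS)

theorem IsWF.isScattered (hS : S.IsWF) : S.IsScattered := by
  intro T hTS hT
  obtain ⟨a, ha, b, hb, hab⟩ := hT.1.exists_lt
  have hne : ∀ {c}, c ∈ T → a < c → (T ∩ Ioo a c).Nonempty := fun hc hac =>
    nonempty_coe_sort.1 <| mk_ne_zero_iff.1 <| (aleph0_pos.trans_le (hT.2 a ha _ hc hac)).ne'
  have hwf : (T ∩ Ioo a b).IsWF := hS.mono (inter_subset_left.trans hTS)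
  obtain ⟨hmT, ham, hmb⟩ := hwf.min_mem (hne hb hab)
  obtain ⟨c, hcT, hac, hcm⟩ := hne hmT ham
  exact hwf.not_lt_min (hne hb hab) ⟨hcT, hac, hcm.trans hmb⟩ hcm

theorem isScattered_preimage_ofDual_iff :
    (OrderDual.ofDual ⁻¹' S).IsScattered ↔ S.IsScattered :=
  ⟨fun h T hTS hT => h (OrderDual.ofDual ⁻¹' T) hTS (isKDense_preimage_ofDual_iff.2 hT),
    fun h T hTS hT => h (OrderDual.toDual ⁻¹' T) hTS (isKDense_preimage_ofDual_iff.1 hT)⟩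

theorem IsScattered.kScattered_coe (hS : S.IsScattered) : KScattered ℵ₀ S := fun T hT =>
  hS _ (Subtype.coe_image_subset S T)
    ((isKDense_coe_iff.1 hT).image fun _ _ _ _ h => Subtype.coe_lt_coe.2 h)

end IsScattered

section CoveredByScattered

variable {S T : Set α}

theorem CoveredByScattered.mono (hS : S.CoveredByScattered ν) (hTS : T ⊆ S) :
    T.CoveredByScattered ν :=
  let ⟨ι, f, hι, hf, hSf⟩ := hS
  ⟨ι, f, hι, hf, hTS.trans hSf⟩

theorem coveredByScattered_empty : (∅ : Set α).CoveredByScattered ν :=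
  ⟨PEmpty, fun _ => ∅, by simp, fun _ => subsingleton_empty.isScattered, empty_subset _⟩

theorem IsScattered.coveredByScattered (hS : S.IsScattered) (hν : 1 ≤ ν) :
    S.CoveredByScattered ν :=
  ⟨PUnit, fun _ => S, by simpa using hν, fun _ => hS, subset_iUnion (fun _ => S) PUnit.unit⟩

theorem coveredByScattered_iUnion (hν : ℵ₀ ≤ ν) {J : Type u} (hJ : #J ≤ ν) {s : J → Set α}
    (hs : ∀ j, (s j).CoveredByScattered ν) : (⋃ j, s j).CoveredByScattered ν := by
  choose ι f hι hf hsf using hs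
  refine ⟨Σ j, ι j, fun p => f p.1 p.2, ?_, fun p => hf p.1 p.2, ?_⟩
  · calc #(Σ j, ι j) = sum fun j => #(ι j) := mk_sigma _
      _ ≤ sum fun _ : J => ν := sum_le_sum _ _ hι
      _ = #J * ν := sum_const' _ _
      _ ≤ ν := mul_le_of_le hν hJ le_rfl
  · refine iUnion_subset fun j x hx => ?_
    obtain ⟨i, hi⟩ := mem_iUnion.1 (hsf j hx)
    exact mem_iUnion.2 ⟨⟨j, i⟩, hi⟩

theorem CoveredByScattered.union (hν : ℵ₀ ≤ ν) (hS : S.CoveredByScattered ν)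
    (hT : T.CoveredByScattered ν) : (S ∪ T).CoveredByScattered ν := by
  obtain ⟨ι, f, hι, hf, hSf⟩ := hS
  obtain ⟨ι', f', hι', hf', hTf'⟩ := hT
  refine ⟨ι ⊕ ι', Sum.elim f f', ?_, Sum.rec hf hf', union_subset ?_ ?_⟩
  · simpa using add_le_of_le hν hι hι'
  · exact hSf.trans <| iUnion_subset fun i => subset_iUnion (Sum.elim f f') (.inl i)
  · exact hTf'.trans <| iUnion_subset fun i => subset_iUnion (Sum.elim f f') (.inr i)

theorem CoveredByScattered.exists_out (hS : S.CoveredByScattered ν) :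
    ∃ f : ν.out → Set α, (∀ i, (f i).IsScattered) ∧ S ⊆ ⋃ i, f i := by
  classical
  obtain ⟨ι, f, hι, hf, hSf⟩ := hS
  obtain ⟨e⟩ := le_def _ _ |>.1 (hι.trans_eq (mk_out ν).symm)
  refine ⟨Function.extend e f fun _ => ∅, fun i => ?_, hSf.trans fun x hx => ?_⟩
  · rw [Function.extend_def]
    split
    exacts [hf _, subsingleton_empty.isScattered]
  · obtain ⟨i, hi⟩ := mem_iUnion.1 hx
    exact mem_iUnion.2 ⟨e i, by rwa [e.injective.extend_apply]⟩

theorem coveredByScattered_preimage_ofDual_iff :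
    (OrderDual.ofDual ⁻¹' S).CoveredByScattered ν ↔ S.CoveredByScattered ν :=
  ⟨fun ⟨ι, f, hι, hf, hSf⟩ => ⟨ι, fun i => OrderDual.toDual ⁻¹' f i, hι,
      fun i => isScattered_preimage_ofDual_iff.1 (hf i), hSf⟩,
    fun ⟨ι, f, hι, hf, hSf⟩ => ⟨ι, fun i => OrderDual.ofDual ⁻¹' f i, hι,
      fun i => isScattered_preimage_ofDual_iff.2 (hf i), hSf⟩⟩

end CoveredByScattered

theorem CoveredByScattered.of_monotoneOn {S : Set α} {g : α → β} (hg : MonotoneOn g S)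
    (himg : (g '' S).IsScattered) (hfib : ∀ b, (S ∩ g ⁻¹' {b}).CoveredByScattered ν) :
    S.CoveredByScattered ν := by
  choose cov hcov hScov using fun b => (hfib b).exists_out
  refine ⟨ν.out, fun ζ => {x ∈ S | x ∈ cov (g x) ζ}, (mk_out ν).le, fun ζ T hT hTd => ?_,
    fun x hx => ?_⟩
  · have hTS : T ⊆ S := fun x hx => (hT hx).1
    by_cases hinj : StrictMonoOn g T
    · exact himg _ (image_mono hTS) (hTd.image hinj)
    obtain ⟨a, ha, b, hb, hab, hgab⟩ : ∃ a ∈ T, ∃ b ∈ T, a < b ∧ g a = g b := by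
      simp only [StrictMonoOn, not_forall] at hinj
      obtain ⟨a, ha, b, hb, hab, hgab⟩ := hinj
      exact ⟨a, ha, b, hb, hab, (hg (hTS ha) (hTS hb) hab.le).eq_of_not_lt hgab⟩
    refine hcov (g a) ζ (T ∩ Icc a b) (fun x ⟨hxT, hax, hxb⟩ => ?_) (hTd.inter_Icc ha hb hab)
    have hgx : g x = g a :=
      le_antisymm (hgab ▸ hg (hTS hxT) (hTS hb) hxb) (hg (hTS ha) (hTS hxT) hax)
    exact hgx ▸ (hT hxT).2
  · obtain ⟨ζ, hζ⟩ := mem_iUnion.1 (hScov (g x) ⟨hx, rfl⟩)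
    exact mem_iUnion.2 ⟨ζ, hx, hζ⟩

theorem exists_isWF_subset_forall_exists_le (S : Set α) :
    ∃ W ⊆ S, W.IsWF ∧ ∀ x ∈ S, ∃ w ∈ W, x ≤ w := by
  have hr : WellFounded (WellOrderingRel : α → α → Prop) := IsWellFounded.wf
  -- `W` is the set of records of a well-ordering of `S`; on `W`, `<` refines the well-ordering.
  refine ⟨{a ∈ S | ∀ b ∈ S, WellOrderingRel b a → b < a}, fun a ha => ha.1, ?_, fun x hx => ?_⟩
  · refine hr.wellFoundedOn.mono' fun a ha b hb hab => ?_
    rcases trichotomous_of WellOrderingRel a b with h | rfl | h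
    exacts [h, (lt_irrefl a hab).elim, ((ha.2 b hb.1 h).asymm hab).elim]
  · obtain ⟨w, ⟨hwS, hxw⟩, hmin⟩ := hr.has_min {y ∈ S | x ≤ y} ⟨x, hx, le_rfl⟩
    refine ⟨w, ⟨hwS, fun b hb hbw => ?_⟩, hxw⟩
    by_contra! hwb
    exact hmin b ⟨hb, hxw.trans hwb⟩ hbw

theorem coveredByScattered_of_forall_Icc {S : Set α} {c : α} (hc : ∀ x ∈ S, c ≤ x)
    (h : ∀ x ∈ S, (Icc c x).CoveredByScattered ν) : S.CoveredByScattered ν := by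
  obtain ⟨W, hWS, hW, hcof⟩ := exists_isWF_subset_forall_exists_le S
  have : ∀ x, ∃ w, x ∈ S → w ∈ W ∧ x ≤ w ∧ ∀ w' ∈ W, x ≤ w' → w ≤ w' := fun x => by
    by_cases hx : x ∈ S
    · obtain ⟨w, hw, hxw⟩ := hcof x hx
      have hne : (W ∩ Ici x).Nonempty := ⟨w, hw, hxw⟩
      have hWx : (W ∩ Ici x).IsWF := hW.mono inter_subset_left
      exact ⟨_, fun _ => ⟨(hWx.min_mem hne).1, (hWx.min_mem hne).2,
        fun w' hw' hxw' => hWx.min_le hne ⟨hw', hxw'⟩⟩⟩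
    · exact ⟨x, fun h => (hx h).elim⟩
  choose g hg using this
  refine CoveredByScattered.of_monotoneOn (g := g) (fun x hx y hy hxy => ?_) ?_ fun w => ?_
  · exact (hg x hx).2.2 _ (hg y hy).1 (hxy.trans (hg y hy).2.1)
  · exact hW.isScattered.mono (image_subset_iff.2 fun x hx => (hg x hx).1)
  · rcases (S ∩ g ⁻¹' {w}).eq_empty_or_nonempty with hempty | ⟨x₀, hx₀, rfl⟩
    · exact hempty ▸ coveredByScattered_empty
    · exact (h _ (hWS (hg x₀ hx₀).1)).mono fun x ⟨hx, hgx⟩ =>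
        ⟨hc x hx, (hg x hx).2.1.trans_eq hgx⟩

theorem coveredByScattered_of_forall_Icc' {S : Set α} {c : α} (hc : ∀ x ∈ S, x ≤ c)
    (h : ∀ x ∈ S, (Icc x c).CoveredByScattered ν) : S.CoveredByScattered ν :=
  coveredByScattered_preimage_ofDual_iff.1 <|
    coveredByScattered_of_forall_Icc (c := OrderDual.toDual c) hc fun x hx => by
      rw [← OrderDual.toDual_ofDual x, Icc_toDual]
      exact coveredByScattered_preimage_ofDual_iff.2 (h _ hx)

theorem coveredByScattered_setOf_uIcc (hν : ℵ₀ ≤ ν) (x : α) :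
    {y | (uIcc x y).CoveredByScattered ν}.CoveredByScattered ν := by
  set C := {y | (uIcc x y).CoveredByScattered ν}
  have hle : (C ∩ Iic x).CoveredByScattered ν :=
    coveredByScattered_of_forall_Icc' (fun y hy => hy.2) fun y ⟨hy, hyx⟩ => by
      rwa [← uIcc_of_ge hyx]
  have hge : (C ∩ Ici x).CoveredByScattered ν :=
    coveredByScattered_of_forall_Icc (fun y hy => hy.2) fun y ⟨hy, hxy⟩ => by
      rwa [← uIcc_of_le hxy]
  simpa [← inter_union_distrib_left, Iic_union_Ici] using hle.union hν hge

end Set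

open Set

section Representatives

variable {α : Type u} [LinearOrder α] {ν : Cardinal.{u}}

def scatteredIntervalSetoid (α : Type u) [LinearOrder α] (hν : ℵ₀ ≤ ν) : Setoid α where
  r x y := (uIcc x y).CoveredByScattered ν
  iseqv :=
    { refl := fun x => by
        simpa using subsingleton_singleton.isScattered.coveredByScattered
          (one_lt_aleph0.le.trans hν)
      symm := fun {x y} h => uIcc_comm x y ▸ h
      trans := fun h₁ h₂ => (h₁.union hν h₂).mono uIcc_subset_uIcc_union_uIcc }

def scatteredIntervalReps (α : Type u) [LinearOrder α] (hν : ℵ₀ ≤ ν) : Set α :=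
  range (Quotient.out : Quotient (scatteredIntervalSetoid α hν) → α)

theorem lt_mk_scatteredIntervalReps_inter_Ioo (hν : ℵ₀ ≤ ν) {a b : α}
    (ha : a ∈ scatteredIntervalReps α hν) (hb : b ∈ scatteredIntervalReps α hν) (hab : a < b) :
    ν < #↥(scatteredIntervalReps α hν ∩ Ioo a b) := by
  set s := scatteredIntervalSetoid α hν
  set R := scatteredIntervalReps α hν
  have heq : ∀ {c d}, c ∈ R → d ∈ R → (uIcc c d).CoveredByScattered ν → c = d := by
    rintro _ _ ⟨p, rfl⟩ ⟨q, rfl⟩ h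
    rw [(Quotient.out_equiv_out (s := s)).1 h]
  have hmem : ∀ x ∈ Icc a b, (Quotient.mk s x).out ∈ R ∩ Icc a b := by
    intro x ⟨hax, hxb⟩
    have hx : (uIcc (Quotient.mk s x).out x).CoveredByScattered ν := Quotient.mk_out x
    refine ⟨⟨_, rfl⟩, not_lt.1 fun hlt => ?_, not_lt.1 fun hlt => ?_⟩
    · refine hlt.ne (heq ⟨_, rfl⟩ ha (hx.mono (uIcc_subset_uIcc_left ?_)))
      exact mem_uIcc.2 (Or.inl ⟨hlt.le, hax⟩)
    · refine hlt.ne' (heq ⟨_, rfl⟩ hb (hx.mono (uIcc_subset_uIcc_left ?_)))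
      exact mem_uIcc.2 (Or.inr ⟨hxb, hlt.le⟩)
  by_contra! hcard
  have hR : #↥(R ∩ Icc a b) ≤ ν :=
    calc #↥(R ∩ Icc a b) = #↥(insert b (insert a (R ∩ Ioo a b))) := by
          rw [← Ico_insert_right hab.le, ← Ioo_insert_left hab, inter_insert_of_mem hb,
            inter_insert_of_mem ha]
      _ ≤ #↥(insert a (R ∩ Ioo a b)) + 1 := mk_insert_le
      _ ≤ ν + 1 + 1 := by grw [mk_insert_le, hcard]
      _ = ν := by rw [add_one_eq hν, add_one_eq hν]
  have hcov : (Icc a b).CoveredByScattered ν :=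
    (coveredByScattered_iUnion hν hR fun r : ↥(R ∩ Icc a b) =>
      coveredByScattered_setOf_uIcc hν (r : α)).mono fun x hx =>
        mem_iUnion.2 ⟨⟨_, hmem x hx⟩, Quotient.mk_out (s := s) x⟩
  exact hab.ne (heq ha hb (uIcc_of_le hab.le ▸ hcov))

theorem coveredByScattered_univ_of_forall_not_isKDense (hν : ℵ₀ ≤ ν)
    (h : ∀ S : Set α, ¬ S.IsKDense (Order.succ ν)) : (univ : Set α).CoveredByScattered ν := by
  set s := scatteredIntervalSetoid α hν
  set R := scatteredIntervalReps α hν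
  have hR : R.Subsingleton := by
    by_contra hR
    exact h R ⟨not_subsingleton_iff.1 hR, fun a ha b hb hab =>
      Order.succ_le_of_lt (lt_mk_scatteredIntervalReps_inter_Ioo hν ha hb hab)⟩
  refine (coveredByScattered_iUnion hν ((mk_le_one_iff_set_subsingleton.2 hR).trans
    (one_lt_aleph0.le.trans hν)) fun r : R => coveredByScattered_setOf_uIcc hν (r : α)).mono
    fun x _ => mem_iUnion.2 ⟨⟨_, Quotient.mk s x, rfl⟩, Quotient.mk_out (s := s) x⟩

end Representatives

/-- Suppose `ν` is an infinite cardinal, `κ = ν⁺`, and `φ` is a `κ`-scattered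
linear order type.  Then `φ` is `(ℵ₀, κ)`-scattered, i.e., every linear order of type `φ`
is the union of fewer than `κ` scattered (i.e. `ℵ₀`-scattered) suborders. -/
theorem stmt1 (ν : Cardinal.{u}) (hν : ℵ₀ ≤ ν) (κ : Cardinal.{u}) (hκ : κ = Order.succ ν)
    (P : Type u) [LinearOrder P] (hP : KScattered κ P) :
    ∃ (ι : Type u) (F : ι → Set P), #ι < κ ∧ (∀ i, KScattered ℵ₀ (F i)) ∧
      (⋃ i, F i) = Set.univ := by
  subst hκ
  obtain ⟨F, hF, hcov⟩ := (coveredByScattered_univ_of_forall_not_isKDense hν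
    fun S hS => hP S (isKDense_coe_iff.2 hS)).exists_out
  exact ⟨ν.out, F, (mk_out ν).trans_lt (Order.lt_succ ν), fun i => (hF i).kScattered_coe,
    univ_subset_iff.1 hcov⟩
end

section
/- Suppose μ is an infinite regular cardinal, T is a μ-saturated linear order, and P is a linear order of cardinality μ. Then there exist μ-saturated suborders T_a of T (for a ∈ P) such that the lexicographic sum Σ_{a∈P} T_a embeds into T; that is, one can choose the T_a pairwise disjoint with T_a entirely below T_b in T whenever a < b in P. -/
open Cardinal

universe u

/-- A linear order `T` is `μ`-saturated if it is nonempty and for all subsets `A, B ⊆ T`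
with `|A| < μ`, `|B| < μ`, and every element of `A` below every element of `B`,
there is `c ∈ T` with `A < c < B`. -/
def KSaturated (μ : Cardinal.{u}) (T : Type u) [LinearOrder T] : Prop :=
  Nonempty T ∧ ∀ A B : Set T, #A < μ → #B < μ → (∀ a ∈ A, ∀ b ∈ B, a < b) →
    ∃ c : T, (∀ a ∈ A, a < c) ∧ (∀ b ∈ B, c < b)

/-!
Well-order `P` in type `μ` and place its points in `T` one at a time: when a point is
reached, fewer than `μ` points have been placed, so saturation yields a position between
those already placed below it and those already placed above it. This embeds
`P ×ₗ Bool` strictly monotonically in `T`, and the open interval between the images of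
`(a, false)` and `(a, true)` is again `μ`-saturated because `μ` is infinite.
-/

open Set

namespace KSaturated

variable {μ : Cardinal.{u}} {T : Type u} [LinearOrder T]

theorem exists_extend_strictMonoOn (hT : KSaturated μ T) {P : Type u} [LinearOrder P]
    {S : Set P} (hS : #S < μ) {f : P → T} (hf : StrictMonoOn f S) (p : P) :
    ∃ c : T, ∀ q ∈ S, (q < p → f q < c) ∧ (p < q → c < f q) := by
  have hsmall : ∀ R : Set P, R ⊆ S → #(f '' R) < μ := fun R hR =>
    mk_image_le.trans_lt ((mk_le_mk_of_subset hR).trans_lt hS)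
  obtain ⟨c, hbelow, habove⟩ := hT.2 (f '' {q ∈ S | q < p}) (f '' {q ∈ S | p < q})
    (hsmall _ fun _ h => h.1) (hsmall _ fun _ h => h.1)
    (by
      rintro _ ⟨q, ⟨hq, hqp⟩, rfl⟩ _ ⟨r, ⟨hr, hpr⟩, rfl⟩
      exact hf hq hr (hqp.trans hpr))
  exact ⟨c, fun q hq =>
    ⟨fun h => hbelow _ ⟨q, ⟨hq, h⟩, rfl⟩, fun h => habove _ ⟨q, ⟨hq, h⟩, rfl⟩⟩⟩

section Embedding

variable {P W : Type u} [LinearOrder P] [LinearOrder W] [WellFoundedLT W]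

/-- Points of `P` are placed in the order of their images under `ι`. Where no point of `T`
fits, `Classical.epsilon` returns an arbitrary one; `strictMono_greedyEmbedding` shows that
this never happens when `T` is saturated beyond the initial segments of `W`. -/
noncomputable def greedyEmbedding [Nonempty T] (ι : P → W) : P → T :=
  (InvImage.wf ι wellFounded_lt).fix fun p rec =>
    Classical.epsilon fun c : T => ∀ q (hq : ι q < ι p),
      (q < p → rec q hq < c) ∧ (p < q → c < rec q hq)

theorem greedyEmbedding_eq [Nonempty T] (ι : P → W) (p : P) :
    greedyEmbedding (T := T) ι p =
      Classical.epsilon fun c : T => ∀ q, ι q < ι p →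
        (q < p → greedyEmbedding ι q < c) ∧ (p < q → c < greedyEmbedding ι q) :=
  WellFounded.fix_eq _ _ p

theorem strictMono_greedyEmbedding [Nonempty T] (hT : KSaturated μ T) {ι : P → W}
    (hι : Function.Injective ι) (hW : ∀ w : W, #(Iio w) < μ) :
    StrictMono (greedyEmbedding (T := T) ι) := by
  set f := greedyEmbedding (T := T) ι
  have key : ∀ p q, ι q < ι p → (q < p → f q < f p) ∧ (p < q → f p < f q) := by
    intro p
    induction hp : ι p using WellFoundedLT.induction generalizing p with
    | ind w IH =>
      subst hp
      have hmono : StrictMonoOn f (ι ⁻¹' Iio (ι p)) := by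
        intro q hq r hr hqr
        rcases lt_trichotomy (ι q) (ι r) with h | h | h
        · exact (IH _ hr r rfl q h).1 hqr
        · exact absurd (hι h ▸ hqr) (lt_irrefl r)
        · exact (IH _ hq q rfl r h).2 hqr
      have hS : #(ι ⁻¹' Iio (ι p)) < μ :=
        (mk_preimage_of_injective ι _ hι).trans_lt (hW _)
      obtain ⟨c, hc⟩ := hT.exists_extend_strictMonoOn hS hmono p
      intro q hq
      rw [show f p = _ from greedyEmbedding_eq ι p]
      exact Classical.epsilon_spec (p := fun c : T => ∀ q, ι q < ι p →
        (q < p → f q < c) ∧ (p < q → c < f q)) ⟨c, hc⟩ q hq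
  intro p q hpq
  rcases lt_trichotomy (ι p) (ι q) with h | h | h
  · exact (key q p h).1 hpq
  · exact absurd (hι h ▸ hpq) (lt_irrefl q)
  · exact (key p q h).2 hpq

end Embedding

theorem exists_strictMono (hT : KSaturated μ T) {P : Type u} [LinearOrder P]
    (hP : #P ≤ μ) : ∃ f : P → T, StrictMono f := by
  obtain ⟨ι⟩ : Nonempty (P ↪ μ.ord.ToType) := by rwa [← le_def, mk_ord_toType]
  have := hT.1
  exact ⟨_, hT.strictMono_greedyEmbedding ι.injective
    fun w => by simpa using mk_Iio_lt w (by simp)⟩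

theorem Ioo (hμ : ℵ₀ ≤ μ) (hT : KSaturated μ T) {u v : T} (huv : u < v) :
    KSaturated μ (Set.Ioo u v) := by
  have hinsert : ∀ (x : T) (A : Set (Set.Ioo u v)), #A < μ →
      #(insert x (Subtype.val '' A) : Set T) < μ :=
    fun x A hA => mk_insert_le.trans_lt
      (add_lt_of_lt hμ (mk_image_le.trans_lt hA) (one_lt_aleph0.trans_le hμ))
  have hsat : ∀ A B : Set (Set.Ioo u v), #A < μ → #B < μ → (∀ a ∈ A, ∀ b ∈ B, a < b) →
      ∃ c : Set.Ioo u v, (∀ a ∈ A, a < c) ∧ (∀ b ∈ B, c < b) := by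
    intro A B hA hB hAB
    obtain ⟨c, hbelow, habove⟩ := hT.2 _ _ (hinsert u A hA) (hinsert v B hB) (by
      rintro _ (rfl | ⟨x, hx, rfl⟩) _ (rfl | ⟨y, hy, rfl⟩)
      exacts [huv, y.2.1, x.2.2, hAB x hx y hy])
    exact ⟨⟨c, hbelow u (mem_insert _ _), habove v (mem_insert _ _)⟩,
      fun a ha => hbelow a (mem_insert_of_mem _ ⟨a, ha, rfl⟩),
      fun b hb => habove b (mem_insert_of_mem _ ⟨b, hb, rfl⟩)⟩
  have hempty : #(∅ : Set (Set.Ioo u v)) < μ := by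
    simpa using aleph0_pos.trans_le hμ
  obtain ⟨c, -⟩ := hsat ∅ ∅ hempty hempty (by simp)
  exact ⟨⟨c⟩, hsat⟩

end KSaturated

/-- Suppose `μ` is an infinite regular cardinal, `T` is a `μ`-saturated
linear order, and `P` is a linear order of cardinality `μ`.  Then there exist
`μ`-saturated suborders `T_a` of `T` (for `a ∈ P`), with `T_a` entirely below `T_b`
whenever `a < b` in `P` (in particular they are pairwise disjoint and the lexicographic
sum `Σ_{a∈P} T_a` embeds into `T`). -/
theorem stmt2 (μ : Cardinal.{u}) (hμ : μ.IsRegular) (T : Type u) [LinearOrder T]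
    (hT : KSaturated μ T) (P : Type u) [LinearOrder P] (hP : #P = μ) :
    ∃ F : P → Set T, (∀ a : P, KSaturated μ (F a)) ∧
      (∀ a b : P, a < b → ∀ x ∈ F a, ∀ y ∈ F b, x < y) := by
  have hμ0 : ℵ₀ ≤ μ := hμ.aleph0_le
  have hcard : #(P ×ₗ ULift.{u} Bool) ≤ μ := by
    change #(P × ULift.{u} Bool) ≤ μ
    rw [mk_prod, lift_id, lift_id, hP, mk_uLift, mk_fintype, Fintype.card_bool,
      Nat.cast_ofNat, lift_ofNat, mul_eq_left hμ0 (ofNat_lt_aleph0.le.trans hμ0) two_ne_zero]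
  obtain ⟨g, hg⟩ := hT.exists_strictMono hcard
  let lo a := g (toLex (a, ⟨false⟩))
  let hi a := g (toLex (a, ⟨true⟩))
  have hlo_hi : ∀ a, lo a < hi a := fun a =>
    hg (Prod.Lex.toLex_lt_toLex.mpr (Or.inr ⟨rfl, Bool.false_lt_true⟩))
  refine ⟨fun a => Ioo (lo a) (hi a), fun a => hT.Ioo hμ0 (hlo_hi a), ?_⟩
  intro a b hab x hx y hy
  have hhi_lo : hi a < lo b := hg (Prod.Lex.toLex_lt_toLex.mpr (Or.inl hab))
  exact hx.2.trans (hhi_lo.trans hy.1)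
end

section
/- Suppose μ is an infinite regular cardinal, T is a μ-saturated linear order, ν < μ is a cardinal, and T_α (α < ν) is a collection of weakly μ-scattered suborders of T. Then ⋃_{α<ν} T_α ≠ T. -/
/-!
Well-order the index set. Going up the well-order, the part of `T_i` lying strictly between the
sets chosen so far is not `μ`-saturated, so it contains small sets `A_i < B_i` such that no point
of `T_i` fills the refined gap. By regularity of `μ` the unions `⋃ A_i < ⋃ B_i` are still small,
so saturation of `T` yields a point strictly between them, and that point lies in no `T_i`.
-/

open Cardinal

universe u

/-- A linear order is weakly `μ`-scattered if it has no `μ`-saturated suborder. -/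
def WeaklyKScattered (μ : Cardinal.{u}) (P : Type u) [LinearOrder P] : Prop :=
  ∀ S : Set P, ¬ KSaturated μ S

open Set

theorem WellFoundedLT.exists_fun_forall_of_forall_exists {ι β : Type*} [LT ι] [WellFoundedLT ι]
    {R : ∀ i : ι, (∀ j < i, β) → β → Prop} (h : ∀ i g, ∃ b, R i g b) :
    ∃ f : ι → β, ∀ i, R i (fun j _ => f j) (f i) := by
  choose step hstep using h
  exact ⟨WellFoundedLT.fix step, fun i => WellFoundedLT.fix_eq step i ▸ hstep _ _⟩

section Gaps

variable {T : Type u} [LinearOrder T]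

def between (A B : Set T) : Set T :=
  {c | (∀ a ∈ A, a < c) ∧ ∀ b ∈ B, c < b}

theorem between_subset_between {A A' B B' : Set T} (hA : A ⊆ A') (hB : B ⊆ B') :
    between A' B' ⊆ between A B :=
  fun _ hc => ⟨fun a ha => hc.1 a (hA ha), fun b hb => hc.2 b (hB hb)⟩

structure IsClosingPair (F P Q A B : Set T) : Prop where
  left_subset : A ⊆ between P Q
  right_subset : B ⊆ between P Q
  lt : ∀ a ∈ A, ∀ b ∈ B, a < b
  disjoint : Disjoint F (between (P ∪ A) (Q ∪ B))

variable {μ : Cardinal.{u}}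

theorem exists_between_eq_empty_of_not_kSaturated {S : Type u} [LinearOrder S] (hμ0 : 0 < μ)
    (h : ¬ KSaturated μ S) :
    ∃ A B : Set S, #A < μ ∧ #B < μ ∧ (∀ a ∈ A, ∀ b ∈ B, a < b) ∧ between A B = ∅ := by
  rcases isEmpty_or_nonempty S with hS | hS
  · exact ⟨∅, ∅, by simpa, by simpa, by simp, eq_empty_of_isEmpty _⟩
  · by_contra hgap
    refine h ⟨hS, fun A B hA hB hlt => ?_⟩
    exact nonempty_iff_ne_empty.2 fun he => hgap ⟨A, B, hA, hB, hlt, he⟩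

theorem WeaklyKScattered.exists_isClosingPair {F : Set T} (hF : WeaklyKScattered μ F)
    (hμ0 : 0 < μ) (P Q : Set T) :
    ∃ A B : Set T, #A < μ ∧ #B < μ ∧ IsClosingPair F P Q A B := by
  let S : Set F := {t | (t : T) ∈ between P Q}
  obtain ⟨A, B, hA, hB, hlt, hempty⟩ :=
    exists_between_eq_empty_of_not_kSaturated hμ0 (hF S)
  let e : S → T := fun x => x.1.1
  refine ⟨e '' A, e '' B, mk_image_le.trans_lt hA, mk_image_le.trans_lt hB,
    ⟨?_, ?_, ?_, ?_⟩⟩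
  · rintro _ ⟨x, -, rfl⟩
    exact x.2
  · rintro _ ⟨x, -, rfl⟩
    exact x.2
  · rintro _ ⟨x, hx, rfl⟩ _ ⟨y, hy, rfl⟩
    exact hlt x hx y hy
  · refine disjoint_left.2 fun c hcF hc => ?_
    have hcS : c ∈ between P Q :=
      between_subset_between subset_union_left subset_union_left hc
    have hmem : (⟨⟨c, hcF⟩, hcS⟩ : S) ∈ between A B :=
      ⟨fun x hx => hc.1 _ (Or.inr ⟨x, hx, rfl⟩), fun x hx => hc.2 _ (Or.inr ⟨x, hx, rfl⟩)⟩
    rwa [hempty] at hmem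

end Gaps

section Families

variable {T ι : Type u} [LinearOrder T] [LinearOrder ι] {F A B : ι → Set T}

def IsClosingFamily (F A B : ι → Set T) : Prop :=
  ∀ i, IsClosingPair (F i) (⋃ j < i, A j) (⋃ j < i, B j) (A i) (B i)

theorem exists_isClosingFamily [WellFoundedLT ι] {μ : Cardinal.{u}}
    (h : ∀ i P Q, ∃ A B : Set T, #A < μ ∧ #B < μ ∧ IsClosingPair (F i) P Q A B) :
    ∃ A B : ι → Set T, (∀ i, #(A i) < μ ∧ #(B i) < μ) ∧ IsClosingFamily F A B := by
  obtain ⟨G, hG⟩ := WellFoundedLT.exists_fun_forall_of_forall_exists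
    (R := fun i g (AB : Set T × Set T) => #AB.1 < μ ∧ #AB.2 < μ ∧
      IsClosingPair (F i) (⋃ j, ⋃ h : j < i, (g j h).1) (⋃ j, ⋃ h : j < i, (g j h).2) AB.1 AB.2)
    fun i g => by
      obtain ⟨A, B, hAB⟩ := h i (⋃ j, ⋃ h : j < i, (g j h).1) (⋃ j, ⋃ h : j < i, (g j h).2)
      exact ⟨(A, B), hAB⟩
  exact ⟨fun i => (G i).1, fun i => (G i).2, fun i => ⟨(hG i).1, (hG i).2.1⟩, fun i => (hG i).2.2⟩

theorem IsClosingFamily.lt (hclose : IsClosingFamily F A B) :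
    ∀ a ∈ ⋃ i, A i, ∀ b ∈ ⋃ i, B i, a < b := by
  simp only [mem_iUnion]
  rintro a ⟨i, ha⟩ b ⟨j, hb⟩
  rcases lt_trichotomy i j with hij | rfl | hji
  · exact ((hclose j).right_subset hb).1 a (mem_biUnion hij ha)
  · exact (hclose i).lt a ha b hb
  · exact ((hclose i).left_subset ha).2 b (mem_biUnion hji hb)

theorem IsClosingFamily.disjoint_between (hclose : IsClosingFamily F A B) (i : ι) :
    Disjoint (F i) (between (⋃ i, A i) (⋃ i, B i)) := by
  refine (hclose i).disjoint.mono_right (between_subset_between ?_ ?_)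
  · exact union_subset (iUnion₂_subset fun j _ => subset_iUnion A j) (subset_iUnion A i)
  · exact union_subset (iUnion₂_subset fun j _ => subset_iUnion B j) (subset_iUnion B i)

end Families

/-- Suppose `μ` is an infinite regular cardinal, `T` is a `μ`-saturated
linear order, `ν < μ` is a cardinal, and `T_α (α < ν)` is a collection of weakly
`μ`-scattered suborders of `T`.  Then `⋃_{α<ν} T_α ≠ T`. -/
theorem stmt3 (μ : Cardinal.{u}) (hμ : μ.IsRegular) (T : Type u) [LinearOrder T]
    (hT : KSaturated μ T) (ι : Type u) (hι : #ι < μ) (F : ι → Set T)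
    (hF : ∀ i, WeaklyKScattered μ (F i)) :
    (⋃ i, F i) ≠ Set.univ := by
  obtain ⟨_, _⟩ := exists_wellFoundedLT ι
  have hμ0 : 0 < μ := aleph0_pos.trans_le hμ.aleph0_le
  obtain ⟨A, B, hsmall, hclose⟩ :=
    exists_isClosingFamily fun i => (hF i).exists_isClosingPair hμ0
  obtain ⟨c, hc⟩ := hT.2 (⋃ i, A i) (⋃ i, B i)
    ((card_iUnion_lt_iff_forall_of_isRegular hμ hι).2 fun i => (hsmall i).1)
    ((card_iUnion_lt_iff_forall_of_isRegular hμ hι).2 fun i => (hsmall i).2)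
    hclose.lt
  intro hU
  obtain ⟨i, hci⟩ := mem_iUnion.1 (hU ▸ mem_univ c)
  exact disjoint_left.1 (hclose.disjoint_between i) hci hc
end

section
/- Suppose μ is an infinite regular cardinal, T is a μ-saturated linear order, ν < μ is a cardinal, and c : T → ν. Then there is a μ-saturated suborder T' ⊆ T such that c is constant on T'. -/
open Cardinal

universe u

/-!
If no colour class contained a `μ`-saturated suborder, then for every small cut `(A, B)` of `T`
and every colour `i`, the elements of colour `i` inside `(A, B)` would have a small unfilled cut,
and adding it to `(A, B)` gives a larger small cut containing no element of colour `i`.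
Doing this for the `ν < μ` colours one after another along a well-order of `ν` (taking unions at
limit stages, which stay small because `μ` is regular) yields a small cut of `T` containing no
element at all, contradicting the saturation of `T`.
-/

variable {T : Type u} [LinearOrder T] {μ : Cardinal.{u}}

def IsBetween (p : Set T × Set T) (x : T) : Prop :=
  (∀ a ∈ p.1, a < x) ∧ ∀ b ∈ p.2, x < b

/-- Cuts are ordered as elements of the lattice `Set T × Set T`, i.e. by inclusion on both sides. -/
structure IsSmallCut (μ : Cardinal.{u}) (p : Set T × Set T) : Prop where
  card_fst_lt : #p.1 < μ
  card_snd_lt : #p.2 < μ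
  lt : ∀ a ∈ p.1, ∀ b ∈ p.2, a < b

theorem IsBetween.anti {p q : Set T × Set T} {x : T} (hpq : p ≤ q) (h : IsBetween q x) :
    IsBetween p x :=
  ⟨fun a ha => h.1 a (hpq.1 ha), fun b hb => h.2 b (hpq.2 hb)⟩

theorem KSaturated.exists_isBetween (hT : KSaturated μ T) {p : Set T × Set T}
    (hp : IsSmallCut μ p) : ∃ x, IsBetween p x :=
  hT.2 p.1 p.2 hp.card_fst_lt hp.card_snd_lt hp.lt

theorem IsSmallCut.iSup (hμ : μ.IsRegular) {κ : Type u} (hκ : #κ < μ)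
    {p : κ → Set T × Set T} (hdir : Directed (· ≤ ·) p) (hp : ∀ k, IsSmallCut μ (p k)) :
    IsSmallCut μ (⨆ k, p k) where
  card_fst_lt := by
    rw [Prod.fst_iSup, Set.iSup_eq_iUnion, card_iUnion_lt_iff_forall_of_isRegular hμ hκ]
    exact fun k => (hp k).card_fst_lt
  card_snd_lt := by
    rw [Prod.snd_iSup, Set.iSup_eq_iUnion, card_iUnion_lt_iff_forall_of_isRegular hμ hκ]
    exact fun k => (hp k).card_snd_lt
  lt a ha b hb := by
    rw [Prod.fst_iSup, Set.iSup_eq_iUnion, Set.mem_iUnion] at ha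
    rw [Prod.snd_iSup, Set.iSup_eq_iUnion, Set.mem_iUnion] at hb
    obtain ⟨⟨k, ha⟩, ⟨l, hb⟩⟩ := And.intro ha hb
    obtain ⟨m, hkm, hlm⟩ := hdir k l
    exact (hp m).lt a (hkm.1 ha) b (hlm.2 hb)

theorem IsSmallCut.exists_le_forall_not_isBetween (hμ : ℵ₀ ≤ μ) {p : Set T × Set T}
    (hp : IsSmallCut μ p) {S : Set T} (hS : ¬ KSaturated μ {x ∈ S | IsBetween p x}) :
    ∃ q, p ≤ q ∧ IsSmallCut μ q ∧ ∀ x ∈ S, ¬ IsBetween q x := by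
  set S' := {x ∈ S | IsBetween p x}
  by_cases hne : Nonempty S'
  swap
  · exact ⟨p, le_rfl, hp, fun x hxS hx => hne ⟨⟨x, hxS, hx⟩⟩⟩
  obtain ⟨A, B, hA, hB, hAB, hgap⟩ : ∃ A B : Set S', #A < μ ∧ #B < μ ∧
      (∀ a ∈ A, ∀ b ∈ B, a < b) ∧ ∀ z : S', (∀ a ∈ A, a < z) → ∃ b ∈ B, b ≤ z := by
    have hS := not_and.mp hS hne
    push Not at hS
    exact hS
  have hA' : #(Subtype.val '' A) < μ := by rwa [mk_image_eq Subtype.val_injective]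
  have hB' : #(Subtype.val '' B) < μ := by rwa [mk_image_eq Subtype.val_injective]
  refine ⟨(p.1 ∪ Subtype.val '' A, p.2 ∪ Subtype.val '' B),
    ⟨Set.subset_union_left, Set.subset_union_left⟩,
    ⟨(mk_union_le _ _).trans_lt (add_lt_of_lt hμ hp.card_fst_lt hA'),
      (mk_union_le _ _).trans_lt (add_lt_of_lt hμ hp.card_snd_lt hB'), ?_⟩, ?_⟩
  · rintro a (ha | ⟨a, ha, rfl⟩) b (hb | ⟨b, hb, rfl⟩)
    · exact hp.lt a ha b hb
    · exact b.2.2.1 a ha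
    · exact a.2.2.2 b hb
    · exact hAB a ha b hb
  · intro x hxS hx
    obtain ⟨b, hb, hbx⟩ := hgap ⟨x, hxS, hx.anti ⟨Set.subset_union_left, Set.subset_union_left⟩⟩
      fun a ha => hx.1 a (Or.inr ⟨a, ha, rfl⟩)
    exact (hx.2 b (Or.inr ⟨b, hb, rfl⟩)).not_ge hbx

theorem exists_isSmallCut_forall (hμ : μ.IsRegular) {ι : Type u} [LinearOrder ι]
    [WellFoundedLT ι] (hι : #ι < μ) {Q : ι → Set T × Set T → Prop} (hQ : ∀ i, Monotone (Q i))
    (hstep : ∀ i p, IsSmallCut μ p → ∃ q, p ≤ q ∧ IsSmallCut μ q ∧ Q i q) :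
    ∃ q, IsSmallCut μ q ∧ ∀ i, Q i q := by
  have hstep' : ∀ i p, ∃ q, p ≤ q ∧ (IsSmallCut μ p → IsSmallCut μ q ∧ Q i q) := by
    intro i p
    by_cases hp : IsSmallCut μ p
    · obtain ⟨q, hpq, hq, hQq⟩ := hstep i p hp
      exact ⟨q, hpq, fun _ => ⟨hq, hQq⟩⟩
    · exact ⟨p, le_rfl, fun h => (hp h).elim⟩
  choose step le_step isSmallCut_step using hstep'
  let F : ι → Set T × Set T :=
    WellFoundedLT.fix fun i F => step i (⨆ j : Set.Iio i, F j j.2)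
  have hF : ∀ i, F i = step i (⨆ j : Set.Iio i, F j) := WellFoundedLT.fix_eq _
  have hmono : Monotone F := by
    intro j i hji
    rcases hji.eq_or_lt with rfl | hji
    · exact le_rfl
    · rw [hF i]
      exact (le_iSup (fun j : Set.Iio i => F j) ⟨j, hji⟩).trans (le_step _ _)
  have hF_spec : ∀ i, IsSmallCut μ (F i) ∧ Q i (F i) := by
    intro i
    induction i using WellFoundedLT.induction with
    | _ i ih =>
      rw [hF i]
      refine isSmallCut_step i _ (IsSmallCut.iSup hμ ((mk_subtype_le _).trans_lt hι) ?_
        fun j => (ih j j.2).1)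
      exact (hmono.comp (Subtype.mono_coe _)).directed_le
  exact ⟨⨆ i, F i, IsSmallCut.iSup hμ hι hmono.directed_le fun i => (hF_spec i).1,
    fun i => hQ i (le_iSup F i) (hF_spec i).2⟩

/-- Suppose `μ` is an infinite regular cardinal, `T` is a `μ`-saturated
linear order, `ν < μ` is a cardinal, and `c : T → ν`.  Then there is a `μ`-saturated
suborder `T' ⊆ T` on which `c` is constant. -/
theorem stmt4 (μ : Cardinal.{u}) (hμ : μ.IsRegular) (T : Type u) [LinearOrder T]
    (hT : KSaturated μ T) (ν : Type u) (hν : #ν < μ) (c : T → ν) :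
    ∃ S : Set T, KSaturated μ S ∧ ∀ x ∈ S, ∀ y ∈ S, c x = c y := by
  by_contra! hno
  have hunsat : ∀ i (p : Set T × Set T), ¬ KSaturated μ {x ∈ c ⁻¹' {i} | IsBetween p x} :=
    fun i p hsat => by
      obtain ⟨x, hx, y, hy, hxy⟩ := hno _ hsat
      exact hxy (hx.1.trans hy.1.symm)
  obtain ⟨_, _⟩ := exists_wellFoundedLT ν
  obtain ⟨q, hq, hq_avoid⟩ := exists_isSmallCut_forall hμ hν
    (Q := fun i q => ∀ x ∈ c ⁻¹' {i}, ¬ IsBetween q x)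
    (fun i _ _ hpq hp x hx hbetween => hp x hx (hbetween.anti hpq))
    fun i p hp => hp.exists_le_forall_not_isBetween hμ.aleph0_le (hunsat i p)
  obtain ⟨x, hx⟩ := hT.exists_isBetween hq
  exact hq_avoid (c x) x rfl hx
end

section
/- Suppose κ is a strongly inaccessible cardinal. Then there is a κ-scattered linear order that is not (ℵ₀, κ)-scattered. -/
open Cardinal

universe u

/-!
The witness is the lexicographic sum, over `i < κ`, of the lexicographically ordered Cantor cubes
`2^|i|`. An interval of it lies inside a sum of fewer than `κ` cubes, each of size `< κ`, so by
regularity and strong limitness it has fewer than `κ` points: the sum is `κ`-scattered.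

Now cover it by fewer than `κ` pieces, let `ν ≥ ℵ₀` bound their number, `θ = 2^ν`, and `λ` be least
with `θ < 2^λ`. Some piece meets the cube `2^λ` in a set `S` of more than `θ` points. By minimality
of `λ`, the eventually constant sequences form a set `E` of at most `θ` points of `2^λ`, and `E`
meets every `(a, b]` with `a < b`. The points `s ∈ S` having some `d ∈ E`, `d > s`, with
`|S ∩ (s, d)| ≤ θ` are at most `θ` many; what is left of `S` has more than `θ` points in each of its
intervals, so the piece is not scattered.
-/

open Set

section Scattered

variable {κ : Cardinal.{u}} {P Q : Type u} [LinearOrder P] [LinearOrder Q]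

theorem KDense.mono {κ' : Cardinal.{u}} (h : KDense κ P) (hκ : κ' ≤ κ) : KDense κ' P :=
  ⟨h.1, fun a b hab => hκ.trans (h.2 a b hab)⟩

theorem KDense.of_orderIso (e : P ≃o Q) (h : KDense κ P) : KDense κ Q := by
  have := h.1
  refine ⟨e.symm.toEquiv.nontrivial, fun a b hab => (h.2 _ _ (e.symm.lt_iff_lt.2 hab)).trans_eq ?_⟩
  exact mk_congr (e.toEquiv.subtypeEquiv fun c => by simp [e.lt_symm_apply, e.symm_apply_lt])

theorem KDense.not_kScattered (h : KDense κ P) : ¬ KScattered κ P :=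
  fun hP => hP univ (h.of_orderIso OrderIso.Set.univ.symm)

theorem KScattered.of_orderEmbedding (f : P ↪o Q) (h : KScattered κ Q) : KScattered κ P :=
  fun S hS => h _ <|
    hS.of_orderIso (StrictMono.orderIso _ (f.strictMono.comp (Subtype.strictMono_coe S)))

theorem KScattered.preimage (f : P ↪o Q) {s : Set Q} (h : KScattered κ s) :
    KScattered κ (f ⁻¹' s) :=
  h.of_orderEmbedding <|
    OrderEmbedding.ofStrictMono (fun x => ⟨f x, x.2⟩) fun _ _ h => f.strictMono h

theorem kScattered_of_forall_mk_Ioo_lt (h : ∀ a b : P, #(Ioo a b) < κ) : KScattered κ P := by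
  rintro S ⟨hS, hdense⟩
  obtain ⟨a, b, hab⟩ := exists_pair_lt S
  refine (hdense a b hab).not_gt ((mk_le_of_injective (f := fun c => (⟨c.1, c.2⟩ : Ioo (a : P) b))
    fun c d hcd => ?_).trans_lt (h a b))
  exact Subtype.ext (Subtype.ext (congrArg Subtype.val hcd :))

theorem kDense_of_forall_le_mk_inter_Ioo {T : Set P} (hT : 1 < #T)
    (h : ∀ a ∈ T, ∀ b ∈ T, a < b → κ ≤ #(T ∩ Ioo a b : Set P)) : KDense κ T :=
  ⟨one_lt_iff_nontrivial.1 hT, fun a b hab =>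
    (h a a.2 b b.2 hab).trans_eq (mk_congr (Equiv.subtypeSubtypeEquivSubtypeInter _ _)).symm⟩

end Scattered

theorem mk_iUnion_le_of_le {α ι : Type u} {θ : Cardinal.{u}} (hθ : ℵ₀ ≤ θ) (hι : #ι ≤ θ)
    {f : ι → Set α} (hf : ∀ i, #(f i) ≤ θ) : #(⋃ i, f i) ≤ θ :=
  (mk_iUnion_le f).trans ((mul_le_mul' hι (ciSup_le' hf)).trans (mul_eq_self hθ).le)

theorem lt_mk_sdiff {α : Type u} {θ : Cardinal.{u}} (hθ : ℵ₀ ≤ θ) {s t : Set α} (hs : θ < #s)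
    (ht : #t ≤ θ) : θ < #(s \ t : Set α) := by
  by_contra! h
  exact hs.not_ge ((le_mk_sdiff_add_mk s t).trans ((add_le_add h ht).trans (add_eq_self hθ).le))

section Condensation

variable {L : Type u} [LinearOrder L] {θ : Cardinal.{u}} {E S : Set L}

theorem mk_le_of_forall_mk_inter_Ioi_le (hθ : ℵ₀ ≤ θ) (hE : #E ≤ θ)
    (hdense : ∀ a ∈ S, ∀ b ∈ S, a < b → ∃ d ∈ E, a < d ∧ d ≤ b) {V : Set L} (hVS : V ⊆ S)
    (hV : ∀ v ∈ V, #(V ∩ Ioi v : Set L) ≤ θ) : #V ≤ θ := by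
  -- a non-minimal `s ∈ V` lies in `V ∩ [d, ∞)` for some `d ∈ E` that is above a point of `V`
  have hcover : V ⊆ {v ∈ V | ∀ w ∈ V, v ≤ w} ∪ ⋃ d : {d ∈ E | ∃ v ∈ V, v < d}, V ∩ Ici d.1 := by
    intro s hs
    by_cases hmin : ∀ w ∈ V, s ≤ w
    · exact Or.inl ⟨hs, hmin⟩
    push Not at hmin
    obtain ⟨w, hw, hws⟩ := hmin
    obtain ⟨d, hd, hwd, hds⟩ := hdense w (hVS hw) s (hVS hs) hws
    exact Or.inr (mem_iUnion.2 ⟨⟨d, hd, w, hw, hwd⟩, hs, hds⟩)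
  have hmin : #{v ∈ V | ∀ w ∈ V, v ≤ w} ≤ θ :=
    (mk_le_one_iff_set_subsingleton.2 fun x hx y hy =>
      le_antisymm (hx.2 y hy.1) (hy.2 x hx.1)).trans (one_lt_aleph0.le.trans hθ)
  have hrest : #(⋃ d : {d ∈ E | ∃ v ∈ V, v < d}, V ∩ Ici d.1) ≤ θ := by
    refine mk_iUnion_le_of_le hθ ((mk_le_mk_of_subset (sep_subset _ _)).trans hE) ?_
    rintro ⟨d, -, v, hv, hvd⟩
    refine (mk_le_mk_of_subset ?_).trans (hV v hv)
    exact fun s hs => ⟨hs.1, hvd.trans_le hs.2⟩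
  exact (mk_le_mk_of_subset hcover).trans
    ((mk_union_le _ _).trans ((add_le_add hmin hrest).trans (add_eq_self hθ).le))

theorem exists_kDense_subset (hθ : ℵ₀ ≤ θ) (hE : #E ≤ θ)
    (hdense : ∀ a ∈ S, ∀ b ∈ S, a < b → ∃ d ∈ E, a < d ∧ d ≤ b) (hS : θ < #S) :
    ∃ T ⊆ S, KDense (Order.succ θ) T := by
  set B : Set L := ⋃ d : E, {s ∈ S | s < d ∧ #(S ∩ Ioo s d : Set L) ≤ θ}
  have hB : #B ≤ θ := by
    refine mk_iUnion_le_of_le hθ hE fun d => ?_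
    refine mk_le_of_forall_mk_inter_Ioi_le hθ hE hdense (fun _ hs => hs.1) fun v hv => ?_
    refine (mk_le_mk_of_subset ?_).trans hv.2.2
    exact fun s hs => ⟨hs.1.1, hs.2, hs.1.2.1⟩
  refine ⟨S \ B, sdiff_subset, kDense_of_forall_le_mk_inter_Ioo
    ((one_lt_aleph0.trans_le hθ).trans (lt_mk_sdiff hθ hS hB)) fun a ha b hb hab => ?_⟩
  obtain ⟨d, hdE, had, hdb⟩ := hdense a ha.1 b hb.1 hab
  have had_thick : θ < #(S ∩ Ioo a d : Set L) := by
    by_contra! h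
    exact ha.2 (mem_iUnion.2 ⟨⟨d, hdE⟩, ha.1, had, h⟩)
  have hab_thick : θ < #((S ∩ Ioo a b) \ B : Set L) :=
    lt_mk_sdiff hθ (had_thick.trans_le (mk_le_mk_of_subset
      (inter_subset_inter_right _ (Ioo_subset_Ioo_right hdb)))) hB
  refine Order.succ_le_of_lt (hab_thick.trans_le (mk_le_mk_of_subset ?_))
  exact fun _ ⟨⟨hs, hI⟩, hB⟩ => ⟨⟨hs, hB⟩, hI⟩

end Condensation

section EventuallyConst

variable (I : Type u) (β : Type*) [LinearOrder I]

def eventuallyConstLex : Set (Lex (I → β)) :=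
  {f | ∃ i b, ∀ j, i < j → ofLex f j = b}

variable {I β}

theorem exists_eventuallyConstLex_mem_Ioc [WellFoundedLT I] [LinearOrder β] [OrderBot β]
    {x y : Lex (I → β)} (hxy : x < y) : ∃ d ∈ eventuallyConstLex I β, x < d ∧ d ≤ y := by
  obtain ⟨i, hpre, hi⟩ := hxy
  let d : I → β := fun j => if j ≤ i then ofLex y j else ⊥
  refine ⟨toLex d, ⟨i, ⊥, fun j hj => if_neg hj.not_ge⟩, ⟨i, fun j hj => ?_, ?_⟩,
    Pi.toLex_monotone fun j => ?_⟩
  · simpa [d, hj.le] using hpre j hj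
  · simpa [d] using hi
  · by_cases hj : j ≤ i <;> simp [d, hj]

theorem mk_eventuallyConstLex_bool_le {θ : Cardinal.{u}} (hθ : ℵ₀ ≤ θ) (hI : #I ≤ θ)
    (h : ∀ i : I, 2 ^ #(Iic i) ≤ θ) : #(eventuallyConstLex I Bool) ≤ θ := by
  let glue (i : I) (p : (Iic i → Bool) × Bool) : Lex (I → Bool) :=
    toLex fun j => if hj : j ≤ i then p.1 ⟨j, hj⟩ else p.2
  have hsub : eventuallyConstLex I Bool ⊆ ⋃ i, range (glue i) := by
    rintro f ⟨i, b, hb⟩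
    refine mem_iUnion.2 ⟨i, (fun j => ofLex f j, b), ?_⟩
    funext j
    by_cases hj : j ≤ i
    · simp [glue, hj]
    · simpa [glue, hj] using (hb j (not_le.1 hj)).symm
  refine (mk_le_mk_of_subset hsub).trans (mk_iUnion_le_of_le hθ hI fun i => mk_range_le.trans ?_)
  simp only [mk_prod, mk_arrow, mk_bool, lift_ofNat, lift_uzero]
  exact (mul_le_mul' (h i) ((ofNat_lt_aleph0 (n := 2)).le.trans hθ)).trans (mul_eq_self hθ).le

end EventuallyConst

theorem mk_Iic_toType_ord_lt {c : Cardinal.{u}} (hc : ℵ₀ ≤ c) (i : c.ord.ToType) :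
    #(Iic i) < c := by
  rw [← Iio_insert]
  exact mk_insert_le.trans_lt
    (add_lt_of_lt hc (by simpa using mk_Iio_lt i) (one_lt_aleph0.trans_le hc))

theorem exists_mk_Iio_toType_ord_eq {c μ : Cardinal.{u}} (h : μ < c) :
    ∃ i : c.ord.ToType, #(Iio i) = μ := by
  refine ⟨Ordinal.ToType.mk ⟨μ.ord, ord_lt_ord.2 h⟩, ?_⟩
  change #{j // j < _} = μ
  rw [← Ordinal.card_typein, ← Ordinal.ToType.mk_symm_apply_coe, RelIso.symm_apply_apply, card_ord]

theorem exists_min_two_power_gt (ν : Cardinal.{u}) :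
    ∃ l : Cardinal.{u}, l ≤ 2 ^ ν ∧ (2 : Cardinal.{u}) ^ ν < 2 ^ l ∧
      ∀ μ < l, (2 : Cardinal.{u}) ^ μ ≤ 2 ^ ν := by
  let s : Set Cardinal.{u} := {l | (2 : Cardinal.{u}) ^ ν < 2 ^ l}
  have hs : (2 : Cardinal.{u}) ^ ν ∈ s := cantor _
  exact ⟨sInf s, csInf_le' hs, csInf_mem ⟨_, hs⟩,
    fun μ hμ => not_lt.1 (notMem_of_lt_csInf' (s := s) hμ)⟩

theorem mk_lex_arrow_bool (α : Type u) : #(Lex (α → Bool)) = 2 ^ #α := by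
  change #(α → Bool) = _
  simp

theorem exists_not_kScattered_cantorCube_of_iUnion_eq_univ {ν l : Cardinal.{u}} (hν : ℵ₀ ≤ ν)
    (hl : l ≤ 2 ^ ν) (hνl : (2 : Cardinal.{u}) ^ ν < 2 ^ l)
    (hmin : ∀ μ < l, (2 : Cardinal.{u}) ^ μ ≤ 2 ^ ν) {ι : Type u} (hι : #ι ≤ 2 ^ ν)
    {F : ι → Set (Lex (l.ord.ToType → Bool))} (hF : ⋃ i, F i = Set.univ) :
    ∃ i, ¬ KScattered ℵ₀ (F i) := by
  set θ : Cardinal.{u} := 2 ^ ν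
  have hθ : ℵ₀ ≤ θ := hν.trans (cantor ν).le
  have hl₀ : ℵ₀ ≤ l := by
    by_contra! h
    exact (hνl.trans (power_lt_aleph0 (ofNat_lt_aleph0 (n := 2)) h)).not_ge hθ
  obtain ⟨i, hi⟩ : ∃ i, θ < #(F i) := by
    by_contra! h
    refine hνl.not_ge ?_
    rw [← card_ord l, ← mk_toType, ← mk_lex_arrow_bool, ← mk_univ, ← hF]
    exact mk_iUnion_le_of_le hθ hι h
  have hE : #(eventuallyConstLex l.ord.ToType Bool) ≤ θ := by
    refine mk_eventuallyConstLex_bool_le hθ (by simpa using hl) fun j => ?_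
    simpa using hmin _ (mk_Iic_toType_ord_lt hl₀ j)
  obtain ⟨T, hTF, hT⟩ :=
    exists_kDense_subset hθ hE (fun _ _ _ _ hab => exists_eventuallyConstLex_mem_Ioc hab) hi
  refine ⟨i, fun h => (hT.mono (hθ.trans (Order.le_succ θ))).not_kScattered ?_⟩
  exact h.of_orderEmbedding (OrderEmbedding.ofStrictMono (inclusion hTF) fun _ _ h => h)

theorem mk_Iio_sigmaLex_le {ι : Type u} [Preorder ι] {β : ι → Type u} [∀ i, Preorder (β i)]
    (b : Σₗ i, β i) : #(Iio b) ≤ sum fun j : Iic (ofLex b).1 => #(β j) := by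
  calc #(Iio b) ≤ #{y : Σ i, β i // y.1 ∈ Iic (ofLex b).1} := by
        refine mk_le_of_injective (f := fun x => ⟨ofLex x.1, ?_⟩) fun x y h => ?_
        · rcases Sigma.Lex.lt_def.1 x.2 with h | ⟨h, -⟩
          exacts [h.le, h.le]
        · exact Subtype.ext (congrArg Subtype.val h :)
    _ = _ := by rw [mk_congr (Equiv.subtypeSigmaEquiv _ _), mk_sigma]

abbrev CantorCubeSum (κ : Cardinal.{u}) : Type u :=
  Σₗ i : κ.ord.ToType, Lex ((#(Iio i)).ord.ToType → Bool)

theorem kScattered_cantorCubeSum {κ : Cardinal.{u}} (hreg : κ.IsRegular)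
    (hlim : κ.IsStrongLimit) : KScattered κ (CantorCubeSum κ) := by
  refine kScattered_of_forall_mk_Ioo_lt fun a b => (mk_le_mk_of_subset Ioo_subset_Iio_self).trans_lt
    ((mk_Iio_sigmaLex_le b).trans_lt (sum_lt_of_isRegular hreg ?_ fun j => ?_))
  · exact mk_Iic_toType_ord_lt hreg.aleph0_le _
  · rw [mk_lex_arrow_bool, mk_toType, card_ord]
    exact hlim.isStrongPrelimit (by simpa using mk_Iio_lt (j : κ.ord.ToType))

noncomputable def CantorCubeSum.fiberEmbedding (κ : Cardinal.{u}) (i : κ.ord.ToType) :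
    Lex ((#(Iio i)).ord.ToType → Bool) ↪o CantorCubeSum κ :=
  OrderEmbedding.ofStrictMono (fun x => toLex ⟨i, x⟩) fun _ _ h =>
    Sigma.Lex.lt_def.2 (Or.inr ⟨rfl, h⟩)

/-- Suppose `κ` is a strongly inaccessible cardinal.  Then there is a
`κ`-scattered linear order that is not `(ℵ₀, κ)`-scattered, i.e., it is not a union of
fewer than `κ` scattered suborders. -/
theorem stmt5 (κ : Cardinal.{u}) (hκ : κ.IsInaccessible) :
    ∃ (P : Type u) (_ : LinearOrder P), KScattered κ P ∧
      ¬ ∃ (ι : Type u) (F : ι → Set P), #ι < κ ∧ (∀ i, KScattered ℵ₀ (F i)) ∧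
        (⋃ i, F i) = Set.univ := by
  refine ⟨CantorCubeSum κ, inferInstance,
    kScattered_cantorCubeSum hκ.isRegular hκ.isStrongLimit, ?_⟩
  rintro ⟨ι, F, hι, hF, hcover⟩
  set ν := #ι + ℵ₀
  have hνκ : ν < κ := add_lt_of_lt hκ.isRegular.aleph0_le hι hκ.aleph0_lt
  obtain ⟨l, hl, hνl, hmin⟩ := exists_min_two_power_gt ν
  obtain ⟨i, rfl⟩ := exists_mk_Iio_toType_ord_eq (hl.trans_lt (hκ.isStrongPrelimit hνκ))
  obtain ⟨j, hj⟩ := exists_not_kScattered_cantorCube_of_iUnion_eq_univ le_add_self hl hνl hmin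
    (le_self_add.trans (cantor ν).le) (F := fun j => CantorCubeSum.fiberEmbedding κ i ⁻¹' F j)
    (by rw [← preimage_iUnion, hcover, preimage_univ])
  exact hj ((hF j).preimage _)
end

section
/- For every linear order P and every cardinal ν, the lexicographic power ^ν P satisfies ^ν P → (P)¹_ν: every coloring of ^ν P in ν colors admits a monochromatic suborder order-isomorphic to P. -/
/-!
Diagonalise against the colouring `g`. By well-founded recursion build `f : ν → P` whose value
at `γ` is, if possible, some `p` such that no `x` extending `f|γ` by `x γ = p` has colour `γ`.
The function `f` itself has some colour `γ = g f`, so at this `γ` no such `p` existed: for every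
`p` there is an `x_p` extending `f|γ` with `x_p γ = p` and colour `γ`. These `x_p` all agree
below `γ`, so `p ↦ x_p` is an order embedding of `P` with monochromatic image.
-/

open Cardinal

universe u

namespace Pi.Lex

variable {T P : Type*} [LinearOrder T]

theorem strictMono_of_eqOn_lt_of_apply_eq [PartialOrder P] {x : P → Lex (T → P)} {γ : T}
    (hlt : ∀ p q, ∀ β < γ, ofLex (x p) β = ofLex (x q) β) (hγ : ∀ p, ofLex (x p) γ = p) :
    StrictMono x := fun p q hpq =>
  ⟨γ, fun β hβ => hlt p q β hβ, (hγ p).trans_lt (hpq.trans_eq (hγ q).symm)⟩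

variable [WellFoundedLT T]

def AvoidsColor (g : Lex (T → P) → T) (γ : T) (s : ∀ β, β < γ → P) (p : P) : Prop :=
  ∀ x : Lex (T → P), (∀ β (h : β < γ), ofLex x β = s β h) → ofLex x γ = p → g x ≠ γ

noncomputable def diagonal [Nonempty P] (g : Lex (T → P) → T) : T → P :=
  wellFounded_lt.fix fun γ s => Classical.epsilon (AvoidsColor g γ s)

theorem diagonal_eq [Nonempty P] (g : Lex (T → P) → T) (γ : T) :
    diagonal g γ = Classical.epsilon (AvoidsColor g γ fun β _ => diagonal g β) :=
  wellFounded_lt.fix_eq _ γ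

theorem exists_forall_not_avoidsColor_diagonal [Nonempty P] (g : Lex (T → P) → T) :
    ∃ γ, ∀ p, ¬ AvoidsColor g γ (fun β _ => diagonal g β) p := by
  by_contra! h
  have hf := Classical.epsilon_spec (h (g (toLex (diagonal g))))
  exact hf (toLex (diagonal g)) (fun _ _ => rfl) (diagonal_eq g _) rfl

theorem exists_orderEmbedding_forall_apply_eq [LinearOrder P] (g : Lex (T → P) → T) :
    ∃ e : P ↪o Lex (T → P), ∀ p q, g (e p) = g (e q) := by
  rcases isEmpty_or_nonempty P with hP | hP
  · exact ⟨OrderEmbedding.ofIsEmpty, fun p => isEmptyElim p⟩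
  obtain ⟨γ, hγ⟩ := exists_forall_not_avoidsColor_diagonal g
  simp only [AvoidsColor, not_forall, not_not] at hγ
  choose x hx_lt hx_γ hx_g using hγ
  have hx : StrictMono x := strictMono_of_eqOn_lt_of_apply_eq
    (fun p q β hβ => (hx_lt p β hβ).trans (hx_lt q β hβ).symm) hx_γ
  exact ⟨.ofStrictMono x hx, fun p q => (hx_g p).trans (hx_g q).symm⟩

end Pi.Lex

/-- For every linear order `P` and every cardinal `ν`, the lexicographic
power `^ν P` satisfies `^ν P → (P)¹_ν`: every coloring of `^ν P` in `ν` colors admits a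
monochromatic suborder order-isomorphic to `P`.  Here `ν` is represented by its initial
ordinal's canonical well-ordered type `ν.ord.toType`, and `^ν P` is the set of functions
`ν → P` compared at the least coordinate of difference, i.e. `Lex (ν.ord.toType → P)`. -/
theorem stmt9 (P : Type u) [LinearOrder P] (ν : Cardinal.{u})
    (g : Lex (ν.ord.ToType → P) → ν.ord.ToType) :
    ∃ S : Set (Lex (ν.ord.ToType → P)), Nonempty (P ≃o S) ∧
      ∀ x ∈ S, ∀ y ∈ S, g x = g y := by
  obtain ⟨e, he⟩ := Pi.Lex.exists_orderEmbedding_forall_apply_eq g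
  refine ⟨Set.range e, ⟨e.orderIso⟩, ?_⟩
  rintro _ ⟨p, rfl⟩ _ ⟨q, rfl⟩
  exact he p q
end

section
/- Suppose β is an ordinal, κ is an infinite regular cardinal, and for each α < β, P_α is a κ-scattered linear order with a designated element 0_α. Then the finite-support anti-lexicographic sum Q = ⊕'_{α<β} P_α is κ-scattered. -/
open Cardinal Ordinal

universe u

/-!
Let `S` be a `κ`-dense suborder of the sum. Among all pairs `f < g` in `S`, choose one, `a < b`,
whose largest coordinate of difference `m` is minimal (the index set is well ordered). Every
element of `[a, b]` agrees with `a` above `m`, and by minimality of `m` two elements of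
`S ∩ [a, b]` already differ at `m`. So evaluation at `m` embeds the `κ`-dense order
`S ∩ [a, b]` into `P m`, contradicting that `P m` is `κ`-scattered.
-/

section KDense

variable {κ : Cardinal.{u}} {α β : Type u} [LinearOrder α] [LinearOrder β]

theorem KDense.map_orderIso (h : KDense κ α) (e : α ≃o β) : KDense κ β := by
  obtain ⟨hnt, hint⟩ := h
  refine ⟨e.symm.toEquiv.nontrivial, fun a b hab => ?_⟩
  calc κ ≤ #{c : α // e.symm a < c ∧ c < e.symm b} := hint _ _ (e.symm.lt_iff_lt.2 hab)
    _ = #{c : β // a < c ∧ c < b} :=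
      Cardinal.mk_congr <| e.toEquiv.subtypeEquiv fun _ => by
        rw [e.symm_apply_lt, e.lt_symm_apply]; rfl

theorem KDense.Icc (h : KDense κ α) {a b : α} (hab : a < b) : KDense κ (Set.Icc a b) := by
  refine ⟨nontrivial_of_ne ⟨a, Set.left_mem_Icc.2 hab.le⟩ ⟨b, Set.right_mem_Icc.2 hab.le⟩
    fun h => hab.ne (congrArg Subtype.val h), fun x y hxy => (h.2 x y hxy).trans ?_⟩
  refine Cardinal.mk_le_of_injective
    (f := fun c => ⟨⟨c.1, x.2.1.trans c.2.1.le, c.2.2.le.trans y.2.2⟩, c.2⟩) fun c d hcd => ?_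
  exact Subtype.ext (congrArg (fun e => e.1.1) hcd)

end KDense

def ColexLtAt {ι : Type*} [LT ι] {P : ι → Type*} [∀ i, LT (P i)] (x y : ∀ i, P i) (m : ι) :
    Prop :=
  (∀ i, m < i → x i = y i) ∧ x m < y m

section Colex

variable {ι : Type*} [LinearOrder ι] {P : ι → Type u} [∀ i, LinearOrder (P i)]
  {Q : Type u} [LinearOrder Q] {φ : Q → ∀ i, P i}

theorem ColexLtAt.eq_above_of_mem_Icc (hφ : ∀ a b, a < b ↔ ∃ m, ColexLtAt (φ a) (φ b) m)
    {a b f : Q} {m : ι} (hab : ColexLtAt (φ a) (φ b) m) (hf : f ∈ Set.Icc a b) :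
    ∀ i, m < i → φ f i = φ a i := by
  rcases hf.1.eq_or_lt with rfl | haf
  · exact fun _ _ => rfl
  obtain ⟨n, hn_above, hn⟩ := (hφ a f).1 haf
  have hnm : n ≤ m := by
    by_contra! hmn
    -- `b` agrees with `a` from `n` on, so `f` would exceed `b` at `n`
    refine hf.2.not_gt ((hφ b f).2 ⟨n, fun i hi => ?_, ?_⟩)
    · rw [← hab.1 i (hmn.trans hi), hn_above i hi]
    · rwa [← hab.1 n hmn]
  exact fun i hi => (hn_above i (hnm.trans_lt hi)).symm

theorem ColexLtAt.strictMonoOn_eval_of_minimal (hφ : ∀ a b, a < b ↔ ∃ m, ColexLtAt (φ a) (φ b) m)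
    {S : Set Q} {a b : Q} {m : ι} (hab : ColexLtAt (φ a) (φ b) m)
    (hmin : ∀ f ∈ S, ∀ g ∈ S, ∀ n, ColexLtAt (φ f) (φ g) n → m ≤ n) :
    StrictMonoOn (fun f => φ f m) (S ∩ Set.Icc a b) := by
  intro f hf g hg hfg
  obtain ⟨n, hn⟩ := (hφ f g).1 hfg
  rcases (hmin f hf.1 g hg.1 n hn).eq_or_lt with rfl | hmn
  · exact hn.2
  · have hfg_n : φ f n = φ g n := by
      rw [hab.eq_above_of_mem_Icc hφ hf.2 n hmn, hab.eq_above_of_mem_Icc hφ hg.2 n hmn]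
    exact absurd hfg_n hn.2.ne

theorem kScattered_of_colex [WellFoundedLT ι] {κ : Cardinal.{u}}
    (hφ : ∀ a b, a < b ↔ ∃ m, ColexLtAt (φ a) (φ b) m) (hP : ∀ i, KScattered κ (P i)) :
    KScattered κ Q := by
  intro S hS
  let D : Set ι := {m | ∃ f ∈ S, ∃ g ∈ S, ColexLtAt (φ f) (φ g) m}
  have hD : D.Nonempty := by
    obtain ⟨x, y, hxy⟩ := hS.1
    rcases lt_or_gt_of_ne hxy with h | h
    · obtain ⟨m, hm⟩ := (hφ x y).1 h
      exact ⟨m, x, x.2, y, y.2, hm⟩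
    · obtain ⟨m, hm⟩ := (hφ y x).1 h
      exact ⟨m, y, y.2, x, x.2, hm⟩
  obtain ⟨m, ⟨a, ha, b, hb, hab⟩, hmin⟩ := wellFounded_lt.has_min D hD
  let J : Set S := Set.Icc ⟨a, ha⟩ ⟨b, hb⟩
  let evalAt : J → P m := fun f => φ f.1.1 m
  have hmono : StrictMono evalAt := fun f g hfg =>
    hab.strictMonoOn_eval_of_minimal hφ
      (fun f hf g hg n hn => not_lt.1 (hmin n ⟨f, hf, g, hg, hn⟩))
      ⟨f.1.2, f.2⟩ ⟨g.1.2, g.2⟩ hfg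
  have hJ : KDense κ J := hS.Icc ((hφ a b).2 ⟨m, hab⟩)
  exact hP m _ (hJ.map_orderIso (StrictMono.orderIso evalAt hmono))

end Colex

theorem stmt18_general (κ : Cardinal.{u}) (β : Ordinal.{u})
    (P : β.ToType → Type u) [∀ α, LinearOrder (P α)] (z : ∀ α, P α)
    (hP : ∀ α, KScattered κ (P α))
    (lo : LinearOrder {f : ∀ α, P α // {α | f α ≠ z α}.Finite})
    (hlo : ∀ f g : {f : ∀ α, P α // {α | f α ≠ z α}.Finite},
      lo.lt f g ↔ ∃ m : β.ToType, (∀ α, m < α → f.1 α = g.1 α) ∧ f.1 m < g.1 m) :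
    KScattered κ {f : ∀ α, P α // {α | f α ≠ z α}.Finite} :=
  kScattered_of_colex (φ := Subtype.val) hlo hP

/-- Suppose `β` is an ordinal, `κ` is an infinite regular cardinal, and for
each `α < β`, `P_α` is a `κ`-scattered linear order with a designated element `0_α = z α`.
Then the finite-support anti-lexicographic sum `Q = ⊕'_{α<β} P_α` — the linear order on
the set of finite-support functions `f` (i.e. `f α = z α` for all but finitely many `α`)
in which `f < g` iff `f Δ' < g Δ'` where `Δ'` is the largest coordinate of difference —
is `κ`-scattered. -/
theorem stmt18 (κ : Cardinal.{u}) (hκ : κ.IsRegular) (β : Ordinal.{u})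
    (P : β.ToType → Type u) [∀ α, LinearOrder (P α)] (z : ∀ α, P α)
    (hP : ∀ α, KScattered κ (P α))
    (lo : LinearOrder {f : ∀ α, P α // {α | f α ≠ z α}.Finite})
    (hlo : ∀ f g : {f : ∀ α, P α // {α | f α ≠ z α}.Finite},
      lo.lt f g ↔ ∃ m : β.ToType, (∀ α, m < α → f.1 α = g.1 α) ∧ f.1 m < g.1 m) :
    KScattered κ {f : ∀ α, P α // {α | f α ≠ z α}.Finite} :=
  stmt18_general κ β P z hP lo hlo
end
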